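/- For square positive semi-definite matrices A and B of the same size, the trace of the matrix square root of A^{1/2} B A^{1/2} equals the sum of the square roots of the eigenvalues (counted with multiplicity) of the product AB. -/

import Mathlib

/-!
Write `S = A^{1/2}`. Then `AB = S (S B)` has the same characteristic polynomial as
`S B S = (S B^{1/2}) (S B^{1/2})ᴴ`, which is positive semidefinite, and for a Hermitian `C` the
trace of `f(C)` is the sum of `f` over the roots of the characteristic polynomial of `C`.
On positive semidefinite matrices `psdSqrt` agrees with `cfc Real.sqrt` and with `CFC.sqrt`.
-/

open Classical Matrix Polynomial

/-- The positive semidefinite square root of a real matrix (junk value `0` if not PSD). -/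
noncomputable def psdSqrt {n : ℕ} (A : Matrix (Fin n) (Fin n) ℝ) : Matrix (Fin n) (Fin n) ℝ :=
  if h : A.PosSemidef then
    (h.1.eigenvectorUnitary : Matrix (Fin n) (Fin n) ℝ) *
      diagonal ((↑) ∘ (√·) ∘ h.1.eigenvalues) *
      (star h.1.eigenvectorUnitary : Matrix (Fin n) (Fin n) ℝ)
  else 0

open scoped ComplexOrder MatrixOrder

namespace Matrix

variable {n 𝕜 : Type*} [Fintype n] [DecidableEq n] [RCLike 𝕜]

lemma IsHermitian.trace_cfc_eq {A : Matrix n n 𝕜} (hA : A.IsHermitian) (f : ℝ → ℝ) :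
    (cfc f A).trace = ∑ i, (f (hA.eigenvalues i) : 𝕜) := by
  rw [hA.cfc_eq, IsHermitian.cfc, Unitary.conjStarAlgAut_apply, trace_mul_comm, ← mul_assoc,
    Unitary.coe_star_mul_self, one_mul, trace_diagonal]
  rfl

lemma IsHermitian.trace_cfc_eq_sum_map_roots_charpoly {A : Matrix n n ℝ} (hA : A.IsHermitian)
    (f : ℝ → ℝ) : (cfc f A).trace = (A.charpoly.roots.map f).sum := by
  rw [hA.trace_cfc_eq, hA.roots_charpoly_eq_eigenvalues, Multiset.map_map]
  rfl

lemma PosSemidef.sqrt_mul_mul_sqrt {B : Matrix n n 𝕜} (hB : B.PosSemidef) (A : Matrix n n 𝕜) :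
    (CFC.sqrt A * B * CFC.sqrt A).PosSemidef := by
  simpa only [(CFC.sqrt_nonneg A).posSemidef.1.eq] using hB.mul_mul_conjTranspose_same (CFC.sqrt A)

lemma PosSemidef.charpoly_mul_eq {A : Matrix n n 𝕜} (hA : A.PosSemidef) (B : Matrix n n 𝕜) :
    (A * B).charpoly = (CFC.sqrt A * B * CFC.sqrt A).charpoly := by
  rw [← CFC.sqrt_mul_sqrt_self A hA.nonneg, mul_assoc, charpoly_mul_comm,
    CFC.sqrt_mul_sqrt_self A hA.nonneg]

end Matrix

lemma psdSqrt_eq_cfc {n : ℕ} {A : Matrix (Fin n) (Fin n) ℝ} (hA : A.PosSemidef) :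
    psdSqrt A = cfc Real.sqrt A := by
  rw [psdSqrt, dif_pos hA, hA.1.cfc_eq, IsHermitian.cfc, Unitary.conjStarAlgAut_apply]
  rfl

lemma psdSqrt_eq_sqrt {n : ℕ} {A : Matrix (Fin n) (Fin n) ℝ} (hA : A.PosSemidef) :
    psdSqrt A = CFC.sqrt A := by
  rw [psdSqrt_eq_cfc hA, CFC.sqrt_eq_real_sqrt A hA.nonneg, cfcₙ_eq_cfc]

/-- For square PSD matrices `A`, `B`, the trace of the PSD square root of `A^{1/2} B A^{1/2}`
equals the sum of the square roots of the eigenvalues of `A * B`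
(counted with algebraic multiplicity, i.e. the roots of its characteristic polynomial). -/
theorem trace_sqrt_eq_sum_sqrt_spec {n : ℕ}
    (A B : Matrix (Fin n) (Fin n) ℝ) (hA : A.PosSemidef) (hB : B.PosSemidef) :
    (psdSqrt (psdSqrt A * B * psdSqrt A)).trace
      = ((A * B).charpoly.roots.map Real.sqrt).sum := by
  have hC := hB.sqrt_mul_mul_sqrt A
  rw [psdSqrt_eq_sqrt hA, psdSqrt_eq_cfc hC, hC.1.trace_cfc_eq_sum_map_roots_charpoly,
    hA.charpoly_mul_eq]
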